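/- arXiv:1901.02192 — 3 statements merged into one kernel-verified Lean document; each statement's English description precedes it below -/
import Mathlib

section
/- Let σ = o₁, …, o_n be a history with non-decreasing start times (o_j.s ≤ o_{j+1}.s for all j) in which every operation is concurrent with at most w − 1 other operations, where w ≥ 1 and i ≥ 0 are integers. Let k ∈ {1, …, n} and let S be a set of i + w indices, each strictly less than k. Then for every permutation π of {1, …, n} in which k appears at an earlier position than every element of S, I_max(π) ≥ i + 1. -/
attribute [local instance] Classical.propDecidable

/-- An operation is a pair of real numbers `(s, f)` with `s < f`. -/
structure Op where
  s : ℝ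
  f : ℝ
  hsf : s < f

/-- Operation `a` precedes operation `b` (written `a → b`) if `a.f < b.s`. -/
def precedes (a b : Op) : Prop := a.f < b.s

/-- `a` and `b` are concurrent if neither precedes the other. -/
def concurrent (a b : Op) : Prop := ¬ precedes a b ∧ ¬ precedes b a

/-- The number of inversions involving position `p` in the permutation `π` of the
history `o`: `#{q < p : (q, p) is an inversion} + #{q > p : (p, q) is an inversion}`,
where `(p, q)` with `p < q` is an inversion if `o (π q)` precedes `o (π p)`. -/
noncomputable def invCount {n : ℕ} (o : Fin n → Op) (π : Equiv.Perm (Fin n)) (p : Fin n) : ℕ :=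
  (Finset.univ.filter (fun q : Fin n =>
    (q < p ∧ precedes (o (π p)) (o (π q))) ∨ (p < q ∧ precedes (o (π q)) (o (π p))))).card

/-- `I_max(π)`: the maximum over positions `p` of the number of inversions involving `p`. -/
noncomputable def Imax {n : ℕ} (o : Fin n → Op) (π : Equiv.Perm (Fin n)) : ℕ :=
  Finset.univ.sup (invCount o π)

/-- In a history with non-decreasing start times in which every operation is
concurrent with at most `w - 1` other operations: if `S` is a set of `i + w`
indices all strictly less than `k`, then any permutation placing `k` at an
earlier position than every element of `S` has `I_max(π) ≥ i + 1`. -/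
theorem stmt_4 {n : ℕ} (o : Fin n → Op) (i w : ℕ) (hw : 1 ≤ w)
    (hmono : ∀ j k : Fin n, j ≤ k → (o j).s ≤ (o k).s)
    (hconc : ∀ k : Fin n,
      (Finset.univ.filter (fun j : Fin n => j ≠ k ∧ concurrent (o j) (o k))).card ≤ w - 1)
    (k : Fin n) (S : Finset (Fin n)) (hScard : S.card = i + w) (hSlt : ∀ j ∈ S, j < k)
    (π : Equiv.Perm (Fin n)) (hpos : ∀ j ∈ S, π.symm k < π.symm j) :
    i + 1 ≤ Imax o π := by
  classical
  set p := π.symm k with hp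
  have hπp : π p = k := π.apply_symm_apply k
  set T := S.filter (fun j => precedes (o j) (o k)) with hT
  -- elements of S not preceding o k are concurrent with o k
  have hsubc : S.filter (fun j => ¬ precedes (o j) (o k)) ⊆
      Finset.univ.filter (fun j : Fin n => j ≠ k ∧ concurrent (o j) (o k)) := by
    intro j hj
    simp only [Finset.mem_filter, Finset.mem_univ, true_and] at hj ⊢
    obtain ⟨hjS, hnp⟩ := hj
    have hjk := hSlt j hjS
    refine ⟨ne_of_lt hjk, hnp, ?_⟩
    intro hkj
    have hmle := hmono j k (le_of_lt hjk)
    exact absurd ((o k).hsf) (not_lt.2 (le_of_lt (lt_of_lt_of_le hkj hmle)))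
  have hcompl : (S.filter (fun j => ¬ precedes (o j) (o k))).card ≤ w - 1 :=
    le_trans (Finset.card_le_card hsubc) (hconc k)
  have hsplit : T.card + (S.filter (fun j => ¬ precedes (o j) (o k))).card = S.card :=
    Finset.card_filter_add_card_filter_not (p := fun j => precedes (o j) (o k))
  have hTcard : i + 1 ≤ T.card := by
    have : T.card + (w - 1) ≥ i + w := by
      rw [← hScard, ← hsplit]
      omega
    omega
  -- map T into the inversion set at position p
  have hinv : T.card ≤ invCount o π p := by
    unfold invCount
    apply Finset.card_le_card_of_injOn (fun j => π.symm j)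
    · intro j hj
      simp only [hT, Finset.mem_coe, Finset.mem_filter] at hj
      obtain ⟨hjS, hjprec⟩ := hj
      simp only [Finset.mem_coe, Finset.mem_filter, Finset.mem_univ, true_and]
      right
      refine ⟨hpos j hjS, ?_⟩
      rw [hπp, π.apply_symm_apply]
      exact hjprec
    · intro a _ b _ hab
      exact π.symm.injective hab
  calc i + 1 ≤ T.card := hTcard
    _ ≤ invCount o π p := hinv
    _ ≤ Imax o π := Finset.le_sup (Finset.mem_univ p)
end

section
/- Let σ = o₁, …, o_n be a history with non-decreasing start times (o_j.s ≤ o_{j+1}.s for all j) in which every operation is concurrent with at most w − 1 other operations, where w ≥ 1 and i ≥ 0 are integers. Let d ∈ {1, …, n} and let T be a set of at least i + w indices, each strictly greater than d. Then for every permutation π of {1, …, n} in which every element of T appears at an earlier position than d, I_max(π) ≥ i + 1. -/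
attribute [local instance] Classical.propDecidable

/-- In a history with non-decreasing start times in which every operation is
concurrent with at most `w - 1` other operations: if `T` is a set of at least
`i + w` indices all strictly greater than `d`, then any permutation placing
every element of `T` at an earlier position than `d` has `I_max(π) ≥ i + 1`. -/
theorem stmt_5 {n : ℕ} (o : Fin n → Op) (i w : ℕ) (hw : 1 ≤ w)
    (hmono : ∀ j k : Fin n, j ≤ k → (o j).s ≤ (o k).s)
    (hconc : ∀ k : Fin n,
      (Finset.univ.filter (fun j : Fin n => j ≠ k ∧ concurrent (o j) (o k))).card ≤ w - 1)
    (d : Fin n) (T : Finset (Fin n)) (hTcard : i + w ≤ T.card) (hTgt : ∀ j ∈ T, d < j)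
    (π : Equiv.Perm (Fin n)) (hpos : ∀ j ∈ T, π.symm j < π.symm d) :
    i + 1 ≤ Imax o π := by
  classical
  set p := π.symm d with hp
  -- Split T into those preceded by d (inversions) and those concurrent with d.
  set A := T.filter (fun j => precedes (o d) (o j)) with hA
  set B := T.filter (fun j => ¬ precedes (o d) (o j)) with hB
  have hsplit : A.card + B.card = T.card := Finset.card_filter_add_card_filter_not _
  -- Every j ∈ B is concurrent with d.
  have hBsub : B ⊆ Finset.univ.filter (fun j : Fin n => j ≠ d ∧ concurrent (o j) (o d)) := by
    intro j hj
    rw [hB, Finset.mem_filter] at hj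
    obtain ⟨hjT, hnp⟩ := hj
    have hdj := hTgt j hjT
    refine Finset.mem_filter.mpr ⟨Finset.mem_univ _, ne_of_gt hdj, ?_, hnp⟩
    intro hjd
    have : (o d).s ≤ (o j).s := hmono d j (le_of_lt hdj)
    have : (o j).f < (o j).s := lt_of_lt_of_le hjd this
    exact absurd this (not_lt.mpr (le_of_lt (o j).hsf))
  have hBcard : B.card ≤ w - 1 := le_trans (Finset.card_le_card hBsub) (hconc d)
  have hAcard : i + 1 ≤ A.card := by
    have : i + w ≤ A.card + (w - 1) := by
      calc i + w ≤ T.card := hTcard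
        _ = A.card + B.card := hsplit.symm
        _ ≤ A.card + (w - 1) := by omega
    omega
  -- Map A into the inversion set at position p.
  have hmap : A.card ≤ invCount o π p := by
    rw [invCount]
    apply Finset.card_le_card_of_injOn (fun j => π.symm j)
    · intro j hj
      rw [hA, Finset.mem_coe, Finset.mem_filter] at hj
      obtain ⟨hjT, hprec⟩ := hj
      refine Finset.mem_filter.mpr ⟨Finset.mem_univ _, Or.inl ⟨hpos j hjT, ?_⟩⟩
      simpa [hp] using hprec
    · intro a _ b _ hab
      exact π.symm.injective hab
  calc i + 1 ≤ A.card := hAcard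
    _ ≤ invCount o π p := hmap
    _ ≤ Imax o π := Finset.le_sup (Finset.mem_univ p)
end

section
/- Let σ = o₁, …, o_n be a history with non-decreasing start times (o_j.s ≤ o_{j+1}.s for all j) such that for every real number t, at most w operations o_j satisfy o_j.s ≤ t ≤ o_j.f, where w ≥ 1 and i ≥ 0 are integers. Let k ∈ {1, …, n} and let S be a set of i + w indices, each strictly less than k. Then for every permutation π of {1, …, n} in which k appears at an earlier position than every element of S, I_max(π) ≥ i + 1. -/
attribute [local instance] Classical.propDecidable

/-- In a history with non-decreasing start times such that at every time instant
`t` at most `w` operations are in progress: if `S` is a set of `i + w` indices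
all strictly less than `k`, then any permutation placing `k` at an earlier
position than every element of `S` has `I_max(π) ≥ i + 1`. -/
theorem stmt_6 {n : ℕ} (o : Fin n → Op) (i w : ℕ) (hw : 1 ≤ w)
    (hmono : ∀ j k : Fin n, j ≤ k → (o j).s ≤ (o k).s)
    (hbound : ∀ t : ℝ,
      (Finset.univ.filter (fun j : Fin n => (o j).s ≤ t ∧ t ≤ (o j).f)).card ≤ w)
    (k : Fin n) (S : Finset (Fin n)) (hScard : S.card = i + w) (hSlt : ∀ j ∈ S, j < k)
    (π : Equiv.Perm (Fin n)) (hpos : ∀ j ∈ S, π.symm k < π.symm j) :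
    i + 1 ≤ Imax o π := by
  classical
  set p := π.symm k with hp
  set A := Finset.univ.filter (fun j : Fin n => (o j).s ≤ (o k).s ∧ (o k).s ≤ (o j).f)
    with hAdef
  have hA : A.card ≤ w := hbound (o k).s
  have hkA : k ∈ A := by
    simp only [hAdef, Finset.mem_filter, Finset.mem_univ, true_and]
    exact ⟨le_refl _, (o k).hsf.le⟩
  have hsub : S.filter (fun j => ¬ precedes (o j) (o k)) ⊆ A.erase k := by
    intro j hj
    simp only [Finset.mem_filter] at hj
    obtain ⟨hjS, hjnp⟩ := hj
    have hjk := hSlt j hjS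
    refine Finset.mem_erase.mpr ⟨hjk.ne, ?_⟩
    simp only [hAdef, Finset.mem_filter, Finset.mem_univ, true_and]
    exact ⟨hmono j k hjk.le, not_lt.mp hjnp⟩
  have h1 : (S.filter (fun j => ¬ precedes (o j) (o k))).card ≤ w - 1 := by
    calc (S.filter (fun j => ¬ precedes (o j) (o k))).card
        ≤ (A.erase k).card := Finset.card_le_card hsub
      _ = A.card - 1 := Finset.card_erase_of_mem hkA
      _ ≤ w - 1 := Nat.sub_le_sub_right hA 1
  have h2 : i + 1 ≤ (S.filter (fun j => precedes (o j) (o k))).card := by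
    have := Finset.card_filter_add_card_filter_not
      (s := S) (p := fun j => precedes (o j) (o k))
    omega
  have h3 : (S.filter (fun j => precedes (o j) (o k))).card ≤ invCount o π p := by
    apply Finset.card_le_card_of_injOn (fun j => π.symm j)
    · intro j hj
      simp only [Finset.mem_coe, Finset.mem_filter] at hj
      simp only [Finset.mem_coe, invCount, Finset.mem_filter, Finset.mem_univ, true_and]
      refine Or.inr ⟨hpos j hj.1, ?_⟩
      simpa [hp] using hj.2
    · intro a _ b _ hab
      exact π.symm.injective hab
  calc i + 1 ≤ invCount o π p := le_trans h2 h3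
    _ ≤ Imax o π := Finset.le_sup (Finset.mem_univ p)
end
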